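/- arXiv:2201.10204 — 3 statements merged into one kernel-verified Lean document; each statement's English description precedes it below -/
import Mathlib

section
/- Let m ≥ 2, and for k ≥ 1 let λ_k > 0 and μ_k = (2 - m + √((m-2)² + 4λ_k))/2, so that μ_k(m - 2 + μ_k) = λ_k. Then there exist constants δ̄ > 0, σ̄ ∈ (0, 1/2), κ̄ > 0 (depending only on m) such that whenever δ < δ̄, σ < σ̄, and λ_k ≥ 2m - κ̄, one has μ_k (1 + σ^{2μ_k})/(1 - σ^{2μ_k}) ≤ ((λ_k + 1)(1 - σ^m - δ) + mδ)/m. -/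
set_option maxHeartbeats 1000000 in
/-- The key elementary inequality behind the epiperimetric inequality: for higher Dirichlet
eigenvalues `λ ≥ 2m - κ̄` and small `δ, σ`, the mode-by-mode energy comparison holds. -/
theorem eigenvalue_mode_inequality (m : ℕ) (hm : 2 ≤ m) :
    ∃ δbar σbar κbar : ℝ, 0 < δbar ∧ σbar ∈ Set.Ioo (0 : ℝ) (1 / 2) ∧ 0 < κbar ∧
      ∀ δ σ lam μ : ℝ, 0 < δ → δ < δbar → 0 < σ → σ < σbar → 0 < lam →
        2 * (m : ℝ) - κbar ≤ lam →
        μ = (2 - (m : ℝ) + Real.sqrt (((m : ℝ) - 2) ^ 2 + 4 * lam)) / 2 →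
        μ * (1 + σ ^ (2 * μ)) / (1 - σ ^ (2 * μ))
          ≤ ((lam + 1) * (1 - σ ^ (m : ℝ) - δ) + (m : ℝ) * δ) / (m : ℝ) := by
  have hM : (2:ℝ) ≤ (m:ℝ) := by exact_mod_cast hm
  have hMpos : (0:ℝ) < (m:ℝ) := by linarith
  refine ⟨1/(28*(m:ℝ)), 1/(8*(m:ℝ)), (m:ℝ)/2, by positivity,
    ⟨by positivity, by rw [div_lt_div_iff₀ (by positivity) (by norm_num)]; linarith⟩,
    by positivity, ?_⟩
  intro δ σ lam μ hδ hδb hσ hσb hlam hlamb hμ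
  -- basic bounds on σ, δ
  have hσm : (m:ℝ) * σ < 1/8 := by
    have := (lt_div_iff₀ (by positivity : (0:ℝ) < 8*(m:ℝ))).1 hσb
    nlinarith
  have hδm : (m:ℝ) * δ < 1/28 := by
    have := (lt_div_iff₀ (by positivity : (0:ℝ) < 28*(m:ℝ))).1 hδb
    nlinarith
  have hσ16 : σ < 1/16 := by nlinarith
  have hσ1 : σ < 1 := by linarith
  -- extract the quadratic relation lam = μ² + (m-2)μ
  set r := Real.sqrt (((m:ℝ) - 2) ^ 2 + 4 * lam) with hr
  have hr0 : 0 ≤ r := Real.sqrt_nonneg _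
  have hr2 : r ^ 2 = ((m:ℝ) - 2) ^ 2 + 4 * lam := by
    rw [hr, Real.sq_sqrt]; nlinarith [sq_nonneg ((m:ℝ) - 2)]
  have hrμ : r = 2*μ + (m:ℝ) - 2 := by rw [hμ]; ring
  have hμpos : 0 < μ := by
    by_contra h
    push_neg at h
    have hle : r ≤ (m:ℝ) - 2 := by rw [hrμ]; linarith
    nlinarith [mul_nonneg (sub_nonneg.2 hle) (by linarith : (0:ℝ) ≤ (m:ℝ) - 2 + r)]
  have hleq : lam = μ^2 + ((m:ℝ) - 2)*μ := by nlinarith [hr2, hrμ]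
  have hμ32 : (3:ℝ)/2 ≤ μ := by
    by_contra h
    push_neg at h
    nlinarith [mul_pos (by linarith : (0:ℝ) < 3/2 - μ) hμpos,
      mul_nonneg (by linarith : (0:ℝ) ≤ 3/2 - μ) (by linarith : (0:ℝ) ≤ (m:ℝ) - 2)]
  -- rpow facts
  have hs_pos : 0 < σ ^ (2*μ) := Real.rpow_pos_of_pos hσ _
  have h3eq : σ ^ ((3:ℕ):ℝ) = σ ^ (3:ℕ) := Real.rpow_natCast σ 3
  have h2eq : σ ^ ((2:ℕ):ℝ) = σ ^ (2:ℕ) := Real.rpow_natCast σ 2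
  have hs_le3 : σ ^ (2*μ) ≤ σ^(3:ℕ) := by
    rw [← h3eq]
    exact Real.rpow_le_rpow_of_exponent_ge hσ hσ1.le (by push_cast; linarith)
  have ht_pos : 0 < σ ^ ((m:ℕ):ℝ) := Real.rpow_pos_of_pos hσ _
  have ht_le : σ ^ ((m:ℕ):ℝ) ≤ σ^(2:ℕ) := by
    rw [← h2eq]
    exact Real.rpow_le_rpow_of_exponent_ge hσ hσ1.le (by push_cast; linarith)
  set s := σ ^ (2*μ) with hs
  set t := σ ^ ((m:ℕ):ℝ) with hts
  have hs_half : s ≤ 1/2 := by nlinarith [hs_le3, hσ.le]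
  subst hleq
  -- key quantities
  have hμ0 : 0 ≤ μ := hμpos.le
  have hB0 : (0:ℝ) ≤ (μ-1)^2 := sq_nonneg _
  have hμ6 : μ ≤ 6*(μ-1)^2 := by
    nlinarith [mul_nonneg (by linarith : (0:ℝ) ≤ 2*μ-3) (by linarith : (0:ℝ) ≤ 3*μ-2)]
  -- bound the first term
  have h1 : 2*(m:ℝ)*μ*s ≤ 12*(m:ℝ)*(μ-1)^2*σ^3 := by
    have a1 : 2*(m:ℝ)*μ*s ≤ 2*(m:ℝ)*μ*σ^3 :=
      mul_le_mul_of_nonneg_left hs_le3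
        (by positivity)
    have a2 : 2*(m:ℝ)*μ*σ^3 ≤ 2*(m:ℝ)*(6*(μ-1)^2)*σ^3 :=
      mul_le_mul_of_nonneg_right
        (mul_le_mul_of_nonneg_left hμ6 (by positivity)) (by positivity)
    nlinarith [a1, a2]
  -- bound the second term
  have hlam1 : μ^2 + ((m:ℝ)-2)*μ + 1 ≤ 7*(m:ℝ)*(μ-1)^2 := by
    nlinarith [mul_le_mul_of_nonneg_left hμ6 hMpos.le,
      mul_le_mul_of_nonneg_right (by linarith : (1:ℝ) ≤ (m:ℝ)) hB0]
  have h2 : (μ^2 + ((m:ℝ)-2)*μ + 1)*(t+δ) ≤ 7*(m:ℝ)*(μ-1)^2*(σ^2+δ) := by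
    apply mul_le_mul hlam1 (by nlinarith [ht_le]) (by positivity) (by positivity)
  -- numeric smallness
  have q1 : (m:ℝ)*σ^3 ≤ σ^2/8 := by
    nlinarith [mul_nonneg (by linarith : (0:ℝ) ≤ 1/8 - (m:ℝ)*σ) (sq_nonneg σ)]
  have q2 : (m:ℝ)*σ^2 ≤ σ/8 := by
    nlinarith [mul_nonneg (by linarith : (0:ℝ) ≤ 1/8 - (m:ℝ)*σ) hσ.le]
  have r1 : (μ-1)^2*((m:ℝ)*σ^3) ≤ (μ-1)^2*(σ^2/8) := mul_le_mul_of_nonneg_left q1 hB0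
  have r2 : (μ-1)^2*((m:ℝ)*σ^2) ≤ (μ-1)^2*(σ/8) := mul_le_mul_of_nonneg_left q2 hB0
  have r3 : (μ-1)^2*((m:ℝ)*δ) ≤ (μ-1)^2*(1/28) := mul_le_mul_of_nonneg_left hδm.le hB0
  have r4 : (μ-1)^2*σ^2 ≤ (μ-1)^2*(1/256) := by
    apply mul_le_mul_of_nonneg_left _ hB0
    nlinarith
  have r5 : (μ-1)^2*σ ≤ (μ-1)^2*(1/16) := mul_le_mul_of_nonneg_left (by linarith) hB0
  have hkey : 2*(m:ℝ)*μ*s + (μ^2 + ((m:ℝ)-2)*μ + 1)*(t+δ) ≤ (μ-1)^2/2 := by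
    linarith [h1, h2, r1, r2, r3, r4, r5, hB0]
  -- conclude
  have h1s : 0 < 1 - s := by linarith
  rw [div_le_div_iff₀ h1s hMpos]
  have hlampos : (0:ℝ) < μ^2 + ((m:ℝ)-2)*μ + 1 := by
    have := mul_nonneg (by linarith : (0:ℝ) ≤ (m:ℝ)-2) hμ0
    linarith [sq_nonneg μ]
  linarith [hkey,
    mul_le_mul_of_nonneg_left (by linarith : (1:ℝ)/2 ≤ 1 - s) hB0,
    mul_nonneg (mul_nonneg hs_pos.le hlampos.le) (by positivity : (0:ℝ) ≤ t + δ),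
    mul_nonneg (by positivity : (0:ℝ) ≤ (m:ℝ)*δ) h1s.le]
end

section
/- Let W : (0,1] → [0,∞) be absolutely continuous and nondecreasing, H : (0,1] → (0,∞) absolutely continuous with (d/ds)(H(s)/s^{m+1}) = (2/s) W(s), and suppose there are constants γ, α > 0 such that W'(s)/W(s) ≥ α/s whenever W(s) ≤ γ s^{-(m+1)} H(s) and W(s) > 0. Assume W(r) ≤ ε r^{-(m+1)} H(r) for some r ∈ (0,1], where ε > 0 satisfies ε ≤ γ(1 - 2ε/α)/2 and 2ε < α. Then W(s) ≤ (s/r)^α W(r) for all 0 < s ≤ r. -/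
/-!
Below the threshold `W ≤ γ h`, where `h(t) = H(t) / t^(m+1)`, the inequality `W' ≥ (α/t) W`
says that `W(t) / t^α` is nondecreasing, so `W(t) ≤ (t/r)^α W(r)`. Integrating `h' = 2W/t`
against this bound gives `h(a) ≥ h(r) - (2/α) W(r) ≥ (1 - 2ε/α) h(r)`, and the smallness of `ε`
turns this into `W(a) ≤ W(r) ≤ (γ/2) h(a)`: as long as the threshold holds on `(a, r)`, it holds
at `a` with room to spare. A continuity argument, run downwards from `r`, shows that the
threshold is never reached on `(0, r]`.
-/

open Set Filter Topology

theorem hasDerivAt_div_rpow {α b t : ℝ} (hb : b ≠ 0) (ht : t ≠ 0) :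
    HasDerivAt (fun x => (x / b) ^ α) (α / t * (t / b) ^ α) t := by
  have htb : t / b ≠ 0 := div_ne_zero ht hb
  refine ((Real.hasDerivAt_rpow_const (p := α) (Or.inl htb)).comp t
    ((hasDerivAt_id t).div_const b)).congr_deriv ?_
  rw [Real.rpow_sub_one htb]
  field_simp

theorem HasDerivAt.nonneg_of_monotoneOn_of_mem_nhdsLT {g : ℝ → ℝ} {g' x : ℝ} {s : Set ℝ}
    (hd : HasDerivAt g g' x) (hg : MonotoneOn g s) (hs : s ∈ 𝓝[<] x) : 0 ≤ g' := by
  refine hd.hasDerivWithinAt.nonneg_of_monotoneOn ?_ hg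
  rw [accPt_principal_iff_nhdsWithin]
  refine (nhdsLT_neBot x).mono (nhdsWithin_le_iff.2 (sdiff_mem hs ?_))
  exact mem_of_superset self_mem_nhdsWithin fun y hy => ne_of_lt hy

theorem monotoneOn_Icc_of_hasDerivAt_nonneg {f f' : ℝ → ℝ} {a b : ℝ}
    (hf : ∀ t ∈ Icc a b, HasDerivAt f (f' t) t) (hf' : ∀ t ∈ Ioo a b, 0 ≤ f' t) :
    MonotoneOn f (Icc a b) :=
  monotoneOn_of_hasDerivWithinAt_nonneg (convex_Icc a b)
    (fun t ht => (hf t ht).continuousAt.continuousWithinAt)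
    (by rw [interior_Icc]; exact fun t ht => (hf t (Ioo_subset_Icc_self ht)).hasDerivWithinAt)
    (by rwa [interior_Icc])

theorem sub_le_sub_of_hasDerivAt_le {f f' g g' : ℝ → ℝ} {a b : ℝ} (hab : a ≤ b)
    (hf : ∀ t ∈ Icc a b, HasDerivAt f (f' t) t) (hg : ∀ t ∈ Icc a b, HasDerivAt g (g' t) t)
    (hle : ∀ t ∈ Ioo a b, f' t ≤ g' t) : f b - f a ≤ g b - g a := by
  have := monotoneOn_Icc_of_hasDerivAt_nonneg (fun t ht => (hg t ht).sub (hf t ht))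
    (fun t ht => sub_nonneg.2 (hle t ht)) (left_mem_Icc.2 hab) (right_mem_Icc.2 hab) hab
  simp only [Pi.sub_apply] at this
  linarith

theorem le_rpow_mul_of_hasDerivAt {f f' : ℝ → ℝ} {α a b : ℝ} (ha : 0 < a)
    (hf : ∀ t ∈ Icc a b, HasDerivAt f (f' t) t) (hf' : ∀ t ∈ Ioo a b, α / t * f t ≤ f' t) :
    ∀ t ∈ Icc a b, f t ≤ (t / b) ^ α * f b := by
  intro t ht
  have hb : 0 < b := ha.trans_le (ht.1.trans ht.2)
  have hpos : ∀ x ∈ Icc a b, 0 < (x / b) ^ α := fun x hx =>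
    Real.rpow_pos_of_pos (div_pos (ha.trans_le hx.1) hb) α
  have hquot : ∀ x ∈ Icc a b, HasDerivAt (fun y => f y / (y / b) ^ α)
      ((f' x * (x / b) ^ α - f x * (α / x * (x / b) ^ α)) / ((x / b) ^ α) ^ 2) x :=
    fun x hx => (hf x hx).div (hasDerivAt_div_rpow hb.ne' (ha.trans_le hx.1).ne')
      (hpos x hx).ne'
  have hmono := monotoneOn_Icc_of_hasDerivAt_nonneg hquot fun x hx => by
    have := mul_le_mul_of_nonneg_right (hf' x hx) (hpos x (Ioo_subset_Icc_self hx)).le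
    exact div_nonneg (by linarith) (sq_nonneg _)
  have : f t / (t / b) ^ α ≤ f b / (b / b) ^ α :=
    hmono ht (right_mem_Icc.2 (ht.1.trans ht.2)) ht.2
  rwa [div_self hb.ne', Real.one_rpow, div_one, div_le_iff₀' (hpos t ht)] at this

theorem sub_two_div_mul_le_of_hasDerivAt {W h : ℝ → ℝ} {α a r : ℝ} (hα : 0 < α) (ha : 0 < a)
    (har : a ≤ r) (hhd : ∀ t ∈ Icc a r, HasDerivAt h (2 / t * W t) t)
    (hdec : ∀ t ∈ Ioo a r, W t ≤ (t / r) ^ α * W r) (hWr : 0 ≤ W r) :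
    h r - 2 / α * W r ≤ h a := by
  have hr : 0 < r := ha.trans_le har
  have hgrowth : h r - h a ≤ 2 / α * W r * (r / r) ^ α - 2 / α * W r * (a / r) ^ α := by
    refine sub_le_sub_of_hasDerivAt_le har hhd
      (fun t ht => (hasDerivAt_div_rpow hr.ne' (ha.trans_le ht.1).ne').const_mul _)
      fun t ht => ?_
    have ht0 : 0 < t := ha.trans ht.1
    calc 2 / t * W t ≤ 2 / t * ((t / r) ^ α * W r) :=
          mul_le_mul_of_nonneg_left (hdec t ht) (by positivity)
      _ = 2 / α * W r * (α / t * (t / r) ^ α) := by field_simp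
  rw [div_self hr.ne', Real.one_rpow] at hgrowth
  have : 0 ≤ 2 / α * W r * (a / r) ^ α := by positivity
  linarith

theorem le_half_threshold_of_hasDerivAt {W W' h : ℝ → ℝ} {γ α ε a r : ℝ} (hγ : 0 ≤ γ)
    (hα : 0 < α) (hεγ : ε ≤ γ * (1 - 2 * ε / α) / 2) (ha : 0 < a) (har : a ≤ r)
    (hWd : ∀ t ∈ Icc a r, HasDerivAt W (W' t) t) (hW' : ∀ t ∈ Ioo a r, α / t * W t ≤ W' t)
    (hhd : ∀ t ∈ Icc a r, HasDerivAt h (2 / t * W t) t)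
    (hWr0 : 0 ≤ W r) (hhr : 0 ≤ h r) (hWr : W r ≤ ε * h r) :
    W a ≤ γ / 2 * h a := by
  have hdec := le_rpow_mul_of_hasDerivAt ha hWd hW'
  have hlower := sub_two_div_mul_le_of_hasDerivAt hα ha har hhd
    (fun t ht => hdec t (Ioo_subset_Icc_self ht)) hWr0
  have hεW : 2 / α * W r ≤ 2 / α * (ε * h r) := by gcongr
  have hr : 0 ≤ r := ha.le.trans har
  have hpow : (a / r) ^ α ≤ 1 :=
    Real.rpow_le_one (div_nonneg ha.le hr) (div_le_one_of_le₀ har hr) hα.le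
  calc W a ≤ (a / r) ^ α * W r := hdec a (left_mem_Icc.2 har)
    _ ≤ W r := mul_le_of_le_one_left hWr0 hpow
    _ ≤ ε * h r := hWr
    _ ≤ γ * (1 - 2 * ε / α) / 2 * h r := by gcongr
    _ = γ / 2 * (h r - 2 / α * (ε * h r)) := by ring
    _ ≤ γ / 2 * h a := by gcongr; linarith

theorem ContinuousOn.forall_lt_zero_of_forall_Ioo {α : Type*}
    [ConditionallyCompleteLinearOrder α] [TopologicalSpace α] [OrderTopology α]
    {g : α → ℝ} {s r : α} (hg : ContinuousOn g (Icc s r))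
    (hstep : ∀ a ∈ Icc s r, (∀ t ∈ Ioo a r, g t ≤ 0) → g a < 0) :
    ∀ t ∈ Icc s r, g t < 0 := by
  by_contra! hbad
  set B := {t ∈ Icc s r | 0 ≤ g t}
  have hB : IsClosed B := hg.preimage_isClosed_of_isClosed isClosed_Icc isClosed_Ici
  have hBne : B.Nonempty := let ⟨t, ht, hgt⟩ := hbad; ⟨t, ht, hgt⟩
  have hBbdd : BddAbove B := ⟨r, fun t ht => ht.1.2⟩
  obtain ⟨hc, hgc⟩ := hB.csSup_mem hBne hBbdd
  refine (hstep _ hc fun t ht => ?_).not_ge hgc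
  by_contra! hgt
  exact ht.1.not_ge (le_csSup hBbdd ⟨⟨hc.1.trans ht.1.le, ht.2.le⟩, hgt.le⟩)

theorem weiss_decay_ode_general (m : ℕ) (γ α ε : ℝ) (hγ : 0 < γ) (hα : 0 < α)
    (hεγ : ε ≤ γ * (1 - 2 * ε / α) / 2)
    (W W' H : ℝ → ℝ)
    (hW0 : ∀ s ∈ Set.Ioc (0 : ℝ) 1, 0 ≤ W s)
    (hWmono : MonotoneOn W (Set.Ioc (0 : ℝ) 1))
    (hWd : ∀ s ∈ Set.Ioc (0 : ℝ) 1, HasDerivAt W (W' s) s)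
    (hH : ∀ s ∈ Set.Ioc (0 : ℝ) 1, 0 < H s)
    (hHd : ∀ s ∈ Set.Ioc (0 : ℝ) 1,
      HasDerivAt (fun t => H t / t ^ (m + 1)) (2 / s * W s) s)
    (hepi : ∀ s ∈ Set.Ioc (0 : ℝ) 1,
      W s ≤ γ * H s / s ^ (m + 1) → 0 < W s → α / s * W s ≤ W' s)
    (r : ℝ) (hr : r ∈ Set.Ioc (0 : ℝ) 1)
    (hWr : W r ≤ ε * H r / r ^ (m + 1)) :
    ∀ s : ℝ, 0 < s → s ≤ r → W s ≤ (s / r) ^ α * W r := by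
  intro s hs hsr
  obtain ⟨hr0, hr1⟩ := hr
  set h : ℝ → ℝ := fun t => H t / t ^ (m + 1)
  have hI : ∀ {a t : ℝ}, 0 < a → t ∈ Icc a r → t ∈ Ioc (0 : ℝ) 1 :=
    fun ha ht => ⟨ha.trans_le ht.1, ht.2.trans hr1⟩
  have hW' : ∀ t ∈ Ioc (0 : ℝ) 1, W t ≤ γ * h t → α / t * W t ≤ W' t := by
    intro t ht hthr
    rcases (hW0 t ht).eq_or_lt with hzero | hpos
    · rw [← hzero, mul_zero]
      exact (hWd t ht).nonneg_of_monotoneOn_of_mem_nhdsLT hWmono (Ioc_mem_nhdsLT_of_mem ht)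
    · exact hepi t ht (by rwa [mul_div_assoc]) hpos
  have hbelow : ∀ t ∈ Icc s r, W t - γ * h t < 0 := by
    refine ContinuousOn.forall_lt_zero_of_forall_Ioo (fun t ht =>
      ((hWd t (hI hs ht)).continuousAt.sub
        (continuousAt_const.mul (hHd t (hI hs ht)).continuousAt)).continuousWithinAt)
      fun a ha hthr => ?_
    have ha0 : 0 < a := hs.trans_le ha.1
    have hha : 0 < h a := div_pos (hH a (hI hs ha)) (by positivity)
    have := le_half_threshold_of_hasDerivAt hγ.le hα hεγ ha0 ha.2
      (fun t ht => hWd t (hI ha0 ht))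
      (fun t ht => hW' t (hI ha0 (Ioo_subset_Icc_self ht)) (sub_nonpos.1 (hthr t ht)))
      (fun t ht => hHd t (hI ha0 ht)) (hW0 r ⟨hr0, hr1⟩)
      (div_pos (hH r ⟨hr0, hr1⟩) (by positivity)).le (by rwa [mul_div_assoc] at hWr)
    linarith [mul_pos hγ hha]
  refine le_rpow_mul_of_hasDerivAt hs (fun t ht => hWd t (hI hs ht)) (fun t ht => ?_)
    s ⟨le_rfl, hsr⟩
  exact hW' t (hI hs (Ioo_subset_Icc_self ht)) (sub_neg.1 (hbelow t (Ioo_subset_Icc_self ht))).le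

/-- Abstract ODE lemma encoding the decay of the Weiss energy `W` below the epiperimetric
threshold: if `W' ≥ (α/s) W` whenever `W(s) ≤ γ s^{-(m+1)} H(s)`, if
`(H(s)/s^{m+1})' = (2/s) W(s)`, and if `W(r) ≤ ε r^{-(m+1)} H(r)` with `ε` small, then
`W(s) ≤ (s/r)^α W(r)` for all `s ≤ r`. -/
theorem weiss_decay_ode (m : ℕ) (γ α ε : ℝ) (hγ : 0 < γ) (hα : 0 < α)
    (hε : 0 < ε) (hεγ : ε ≤ γ * (1 - 2 * ε / α) / 2) (hεα : 2 * ε < α)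
    (W W' H : ℝ → ℝ)
    (hW0 : ∀ s ∈ Set.Ioc (0 : ℝ) 1, 0 ≤ W s)
    (hWmono : MonotoneOn W (Set.Ioc (0 : ℝ) 1))
    (hWd : ∀ s ∈ Set.Ioc (0 : ℝ) 1, HasDerivAt W (W' s) s)
    (hH : ∀ s ∈ Set.Ioc (0 : ℝ) 1, 0 < H s)
    (hHd : ∀ s ∈ Set.Ioc (0 : ℝ) 1,
      HasDerivAt (fun t => H t / t ^ (m + 1)) (2 / s * W s) s)
    (hepi : ∀ s ∈ Set.Ioc (0 : ℝ) 1,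
      W s ≤ γ * H s / s ^ (m + 1) → 0 < W s → α / s * W s ≤ W' s)
    (r : ℝ) (hr : r ∈ Set.Ioc (0 : ℝ) 1)
    (hWr : W r ≤ ε * H r / r ^ (m + 1)) :
    ∀ s : ℝ, 0 < s → s ≤ r → W s ≤ (s / r) ^ α * W r :=
  weiss_decay_ode_general m γ α ε hγ hα hεγ W W' H hW0 hWmono hWd hH hHd hepi r hr hWr
end

section
/- Let m ≥ 2 and suppose H : (0, s₁] → (0, ∞) is absolutely continuous and satisfies (d/dr) log(H(r)/r^{m-1}) ≤ 31/(8r) for all 0 < r ≤ s₁. Then H(r) ≥ (H(s₁)/s₁^{m+3-1/8}) · r^{m+3-1/8} for all 0 < r ≤ s₁. Consequently, if additionally H(r) ≤ C r^{m+3-δ} for some δ < 1/8 and all small r, then H(s₁) = 0, a contradiction; hence no positive H can satisfy both bounds. -/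
/-- If `(d/dr) log(H(r)/r^{m-1}) ≤ 31/(8r)` on `(0, s₁]`, then
`H(r) ≥ (H(s₁)/s₁^{m+3-1/8}) r^{m+3-1/8}`; consequently no positive `H` can additionally
satisfy `H(r) ≤ C r^{m+3-δ}` for small `r` with `δ < 1/8`. -/
theorem frequency_lower_bound_incompatibility
    (m : ℕ) (hm : 2 ≤ m) (s₁ : ℝ) (hs₁ : 0 < s₁)
    (H D : ℝ → ℝ)
    (hpos : ∀ r ∈ Set.Ioc (0 : ℝ) s₁, 0 < H r)
    (hderiv : ∀ r ∈ Set.Ioc (0 : ℝ) s₁,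
      HasDerivAt (fun t => Real.log (H t / t ^ ((m : ℝ) - 1))) (D r) r)
    (hbound : ∀ r ∈ Set.Ioc (0 : ℝ) s₁, D r ≤ 31 / (8 * r)) :
    (∀ r ∈ Set.Ioc (0 : ℝ) s₁,
        H s₁ / s₁ ^ ((m : ℝ) + 3 - 1 / 8) * r ^ ((m : ℝ) + 3 - 1 / 8) ≤ H r) ∧
    ∀ C δ : ℝ, 0 < C → 0 < δ → δ < 1 / 8 →
      (∀ᶠ r in nhdsWithin 0 (Set.Ioi (0 : ℝ)), H r ≤ C * r ^ ((m : ℝ) + 3 - δ)) →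
      False := by
  set β : ℝ := (m : ℝ) + 3 - 1 / 8 with hβdef
  have hm0 : (0 : ℝ) ≤ (m : ℝ) := Nat.cast_nonneg m
  have hβpos : 0 < β := by simp only [hβdef]; linarith
  set g : ℝ → ℝ := fun t => Real.log (H t / t ^ ((m : ℝ) - 1)) - 31 / 8 * Real.log t
    with hgdef
  have hgderiv : ∀ r ∈ Set.Ioc (0 : ℝ) s₁, HasDerivAt g (D r - 31 / (8 * r)) r := by
    intro r hr
    have h1 := hderiv r hr
    have h2 := (Real.hasDerivAt_log (ne_of_gt hr.1)).const_mul (31 / 8 : ℝ)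
    have h3 := h1.sub h2
    have : D r - 31 / 8 * r⁻¹ = D r - 31 / (8 * r) := by
      field_simp
    rw [this] at h3
    exact h3
  have hanti : AntitoneOn g (Set.Ioc 0 s₁) := by
    apply antitoneOn_of_deriv_nonpos (convex_Ioc _ _)
    · intro r hr
      exact ((hgderiv r hr).continuousAt).continuousWithinAt
    · intro r hr
      rw [interior_Ioc] at hr
      exact ((hgderiv r ⟨hr.1, hr.2.le⟩).differentiableAt).differentiableWithinAt
    · intro r hr
      rw [interior_Ioc] at hr
      rw [(hgderiv r ⟨hr.1, hr.2.le⟩).deriv]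
      have := hbound r ⟨hr.1, hr.2.le⟩
      linarith
  have hgeq : ∀ t : ℝ, 0 < t → 0 < H t → g t = Real.log (H t) - β * Real.log t := by
    intro t ht hHt
    have ht' : (0 : ℝ) < t ^ ((m : ℝ) - 1) := Real.rpow_pos_of_pos ht _
    simp only [hgdef]
    rw [Real.log_div (ne_of_gt hHt) (ne_of_gt ht'), Real.log_rpow ht]
    simp only [hβdef]; ring
  have hs₁mem : s₁ ∈ Set.Ioc (0 : ℝ) s₁ := ⟨hs₁, le_refl _⟩
  have hHs : 0 < H s₁ := hpos s₁ hs₁mem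
  have key : ∀ r ∈ Set.Ioc (0 : ℝ) s₁, H s₁ / s₁ ^ β * r ^ β ≤ H r := by
    intro r hr
    have hH : 0 < H r := hpos r hr
    have hmono := hanti hr hs₁mem hr.2
    rw [hgeq r hr.1 hH, hgeq s₁ hs₁ hHs] at hmono
    have hL : 0 < H s₁ / s₁ ^ β * r ^ β := by
      have := Real.rpow_pos_of_pos hs₁ β
      have := Real.rpow_pos_of_pos hr.1 β
      positivity
    rw [← Real.log_le_log_iff hL hH]
    rw [Real.log_mul (ne_of_gt (by positivity : (0:ℝ) < H s₁ / s₁ ^ β))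
        (ne_of_gt (Real.rpow_pos_of_pos hr.1 β)),
      Real.log_div (ne_of_gt hHs) (ne_of_gt (Real.rpow_pos_of_pos hs₁ β)),
      Real.log_rpow hs₁, Real.log_rpow hr.1]
    linarith
  refine ⟨key, ?_⟩
  intro C δ hC hδ hδ8 hev
  set c : ℝ := H s₁ / s₁ ^ β with hcdef
  have hc : 0 < c := by
    have := Real.rpow_pos_of_pos hs₁ β
    positivity
  set e : ℝ := 1 / 8 - δ with hedef
  have he : 0 < e := by simp only [hedef]; linarith
  have htend : Filter.Tendsto (fun r : ℝ => r ^ e) (nhdsWithin 0 (Set.Ioi (0:ℝ))) (nhds 0) := by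
    have h0 : ContinuousAt (fun r : ℝ => r ^ e) 0 :=
      Real.continuousAt_rpow_const 0 e (Or.inr he.le)
    have h4 : Filter.Tendsto (fun r : ℝ => r ^ e) (nhdsWithin 0 (Set.Ioi (0:ℝ))) (nhds (0 ^ e)) :=
      h0.tendsto.mono_left nhdsWithin_le_nhds
    rwa [Real.zero_rpow (ne_of_gt he)] at h4
  have h1 : ∀ᶠ r in nhdsWithin 0 (Set.Ioi (0:ℝ)), r ^ e < c / C :=
    htend.eventually_lt_const (by positivity)
  have h2 : ∀ᶠ r in nhdsWithin 0 (Set.Ioi (0:ℝ)), r ∈ Set.Ioc (0:ℝ) s₁ :=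
    Ioc_mem_nhdsGT_of_mem ⟨le_refl 0, hs₁⟩
  obtain ⟨r, hr1, hr2, hr3⟩ := (h1.and (h2.and hev)).exists
  have hr0 : 0 < r := hr2.1
  have hlow : c * r ^ β ≤ H r := key r hr2
  have hsplit : r ^ ((m : ℝ) + 3 - δ) = r ^ β * r ^ e := by
    rw [← Real.rpow_add hr0]
    congr 1
    simp only [hβdef, hedef]; ring
  have hβr : 0 < r ^ β := Real.rpow_pos_of_pos hr0 β
  have hup : H r ≤ C * (r ^ β * r ^ e) := by rw [← hsplit]; exact hr3
  have : c * r ^ β ≤ C * r ^ e * r ^ β := by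
    calc c * r ^ β ≤ H r := hlow
    _ ≤ C * (r ^ β * r ^ e) := hup
    _ = C * r ^ e * r ^ β := by ring
  have hcle : c ≤ C * r ^ e := le_of_mul_le_mul_right this hβr
  have : C * r ^ e < C * (c / C) := by
    exact mul_lt_mul_of_pos_left hr1 hC
  rw [mul_div_cancel₀ _ (ne_of_gt hC)] at this
  linarith
end
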